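/- Let Ω be a nonempty finite type and let E = ⟨𝓔, mod⟩ be an epistemic space over Ω. Then AGM revision is realizable in E (i.e., there exists an AGM revision operator for E) if and only if E satisfies both (ZR1) and (ZR2). -/

import Mathlib

open Set

/-- `minSet r S` is the set of `r`-minimal elements of `S`:
`min(S, r) = {ω ∈ S : r ω ω' for all ω' ∈ S}`. -/
def minSet {Ω : Type*} (r : Ω → Ω → Prop) (S : Set Ω) : Set Ω :=
  {ω ∈ S | ∀ ω' ∈ S, r ω ω'}

/-- A linear order as a relation: total, antisymmetric and transitive. -/
def IsLinRel {Ω : Type*} (r : Ω → Ω → Prop) : Prop :=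
  (∀ a b, r a b ∨ r b a) ∧ (∀ a b, r a b → r b a → a = b) ∧
    (∀ a b c, r a b → r b c → r a c)

/-- AGM contraction operator for the epistemic space `⟨E, md⟩` (postulates C1–C7,
formulated on model sets). -/
def IsContraction {Ω E : Type*} (md : E → Set Ω) (c : E → Set Ω → E) : Prop :=
  ∀ (Ψ : E) (A B : Set Ω),
    md Ψ ⊆ md (c Ψ A) ∧
    (¬ md Ψ ⊆ A → md (c Ψ A) ⊆ md Ψ) ∧
    (A ≠ Set.univ → ¬ md (c Ψ A) ⊆ A) ∧
    md (c Ψ A) ∩ A ⊆ md Ψ ∧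
    md (c Ψ (A ∩ B)) ⊆ md (c Ψ A) ∪ md (c Ψ B) ∧
    (¬ md (c Ψ (A ∩ B)) ⊆ B → md (c Ψ B) ⊆ md (c Ψ (A ∩ B)))

/-- AGM revision operator for the epistemic space `⟨E, md⟩` (postulates R1–R6,
formulated on model sets). -/
def IsRevision {Ω E : Type*} (md : E → Set Ω) (s : E → Set Ω → E) : Prop :=
  ∀ (Ψ : E) (A B : Set Ω),
    md (s Ψ A) ⊆ A ∧
    (md Ψ ∩ A ≠ ∅ → md (s Ψ A) = md Ψ ∩ A) ∧
    (A ≠ ∅ → md (s Ψ A) ≠ ∅) ∧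
    md (s Ψ A) ∩ B ⊆ md (s Ψ (A ∩ B)) ∧
    (md (s Ψ A) ∩ B ≠ ∅ → md (s Ψ (A ∩ B)) ⊆ md (s Ψ A) ∩ B)

/-- Postulate (ZC). -/
def ZC {Ω E : Type*} (md : E → Set Ω) : Prop :=
  ∀ (Ψ : E) (M : Set Ω), md Ψ ⊆ M → ∃ Ψ' : E, md Ψ' = M

/-- Postulate (ZR1). -/
def ZR1 {Ω E : Type*} (md : E → Set Ω) : Prop :=
  ∀ ω : Ω, ∃ Ψ : E, md Ψ = {ω}

/-- Postulate (ZR2). -/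
def ZR2 {Ω E : Type*} (md : E → Set Ω) : Prop :=
  ∀ (Ψ : E) (M : Set Ω), M ⊆ md Ψ → ∃ Ψ' : E, md Ψ' = M

/-- Postulate (Unbiased). -/
def Unbiased {Ω E : Type*} (md : E → Set Ω) : Prop :=
  ∀ M : Set Ω, ∃ Ψ : E, md Ψ = M

/-- Maxichoice contraction operator. -/
def IsMaxichoiceContraction {Ω E : Type*} (md : E → Set Ω) (c : E → Set Ω → E) : Prop :=
  IsContraction md c ∧
    ∀ Ψ : E, ∃ r : Ω → Ω → Prop, IsLinRel r ∧ ∀ A : Set Ω,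
      (¬ md Ψ ⊆ A → md (c Ψ A) = md Ψ) ∧
      (md Ψ ⊆ A → md (c Ψ A) = md Ψ ∪ minSet r Aᶜ)

/-- Linear contraction operator: a maxichoice contraction operator based on one
single linear order for all epistemic states. -/
def IsLinearContraction {Ω E : Type*} (md : E → Set Ω) (c : E → Set Ω → E) : Prop :=
  IsContraction md c ∧
    ∃ r : Ω → Ω → Prop, IsLinRel r ∧ ∀ (Ψ : E) (A : Set Ω),
      (¬ md Ψ ⊆ A → md (c Ψ A) = md Ψ) ∧
      (md Ψ ⊆ A → md (c Ψ A) = md Ψ ∪ minSet r Aᶜ)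

/-- Full meet contraction operator. -/
def IsFullMeetContraction {Ω E : Type*} (md : E → Set Ω) (c : E → Set Ω → E) : Prop :=
  IsContraction md c ∧
    ∀ (Ψ : E) (A : Set Ω),
      (¬ md Ψ ⊆ A → md (c Ψ A) = md Ψ) ∧
      (md Ψ ⊆ A → md (c Ψ A) = md Ψ ∪ Aᶜ)

/-- Maxichoice revision operator. -/
def IsMaxichoiceRevision {Ω E : Type*} (md : E → Set Ω) (s : E → Set Ω → E) : Prop :=
  IsRevision md s ∧
    ∀ Ψ : E, ∃ r : Ω → Ω → Prop, IsLinRel r ∧ ∀ A : Set Ω,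
      (md Ψ ∩ A ≠ ∅ → md (s Ψ A) = md Ψ ∩ A) ∧
      (md Ψ ∩ A = ∅ → md (s Ψ A) = minSet r A)

/-- Linear revision operator: a maxichoice revision operator based on one single
linear order for all epistemic states. -/
def IsLinearRevision {Ω E : Type*} (md : E → Set Ω) (s : E → Set Ω → E) : Prop :=
  IsRevision md s ∧
    ∃ r : Ω → Ω → Prop, IsLinRel r ∧ ∀ (Ψ : E) (A : Set Ω),
      (md Ψ ∩ A ≠ ∅ → md (s Ψ A) = md Ψ ∩ A) ∧
      (md Ψ ∩ A = ∅ → md (s Ψ A) = minSet r A)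

/-- Full meet revision operator. -/
def IsFullMeetRevision {Ω E : Type*} (md : E → Set Ω) (s : E → Set Ω → E) : Prop :=
  IsRevision md s ∧
    ∀ (Ψ : E) (A : Set Ω),
      (md Ψ ∩ A ≠ ∅ → md (s Ψ A) = md Ψ ∩ A) ∧
      (md Ψ ∩ A = ∅ → md (s Ψ A) = A)

/-!
Necessity: revising any state by `{ω}` yields a state with models `{ω}`, and revising `Ψ` by
`M ⊆ md Ψ` yields a state with models exactly `M`.

Sufficiency: well-order `Ω` and revise `Ψ` by `A` to a state with models `md Ψ ∩ A` if this is
consistent, and to a state whose only model is the least element of `A` otherwise; (ZR2) and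
(ZR1) supply these states. Because one order serves every `Ψ`, the least element of `A` that lies
in `B` is the least element of `A ∩ B`, which gives (R5) and (R6).
-/

section Necessity

variable {Ω E : Type*} {md : E → Set Ω} {s : E → Set Ω → E}

theorem IsRevision.md_eq_singleton (hs : IsRevision md s) (Ψ : E) (ω : Ω) :
    md (s Ψ {ω}) = {ω} :=
  (nonempty_iff_ne_empty.2 <| (hs Ψ {ω} ∅).2.2.1 (singleton_ne_empty ω)).subset_singleton_iff.1
    (hs Ψ {ω} ∅).1

theorem IsRevision.md_eq_of_subset (hs : IsRevision md s) {Ψ : E} {M : Set Ω}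
    (hM : M ⊆ md Ψ) : md (s Ψ M) = M := by
  rcases eq_or_ne M ∅ with rfl | hne
  · exact subset_empty_iff.1 (hs Ψ ∅ ∅).1
  · rw [(hs Ψ M ∅).2.1 (by rwa [inter_eq_right.2 hM]), inter_eq_right.2 hM]

theorem IsRevision.zr1 [Nonempty E] (hs : IsRevision md s) : ZR1 md :=
  fun ω => ⟨s (Classical.arbitrary E) {ω}, hs.md_eq_singleton _ ω⟩

theorem IsRevision.zr2 (hs : IsRevision md s) : ZR2 md :=
  fun Ψ _ hM => ⟨s Ψ _, hs.md_eq_of_subset hM⟩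

end Necessity

section MinSet

variable {Ω : Type*}

theorem minSet_subset (r : Ω → Ω → Prop) (A : Set Ω) : minSet r A ⊆ A :=
  fun _ h => h.1

theorem minSet_inter_subset (r : Ω → Ω → Prop) (A B : Set Ω) :
    minSet r A ∩ B ⊆ minSet r (A ∩ B) :=
  fun _ ⟨⟨hA, hmin⟩, hB⟩ => ⟨⟨hA, hB⟩, fun ω' hω' => hmin ω' hω'.1⟩

theorem minSet_inter_subset_of_nonempty {r : Ω → Ω → Prop} [IsTrans Ω r] {A B : Set Ω}
    (h : (minSet r A ∩ B).Nonempty) : minSet r (A ∩ B) ⊆ minSet r A ∩ B := by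
  obtain ⟨ω, ⟨hωA, hωmin⟩, hωB⟩ := h
  rintro η ⟨⟨hηA, hηB⟩, hηmin⟩
  exact ⟨⟨hηA, fun ω' hω' => _root_.trans (hηmin ω ⟨hωA, hωB⟩) (hωmin ω' hω')⟩,
    hηB⟩

theorem minSet_le_subsingleton [PartialOrder Ω] (A : Set Ω) :
    (minSet (· ≤ ·) A).Subsingleton :=
  fun _ ha _ hb => le_antisymm (ha.2 _ hb.1) (hb.2 _ ha.1)

theorem minSet_le_nonempty [LinearOrder Ω] [WellFoundedLT Ω] {A : Set Ω} (hA : A.Nonempty) :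
    (minSet (· ≤ ·) A).Nonempty :=
  ⟨wellFounded_lt.min A hA, wellFounded_lt.min_mem A hA,
    fun _ hω' => wellFounded_lt.min_le hω'⟩

end MinSet

section RevisionModels

variable {Ω : Type*}

open Classical in
noncomputable def revisionModels (r : Ω → Ω → Prop) (K A : Set Ω) : Set Ω :=
  if (K ∩ A).Nonempty then K ∩ A else minSet r A

variable {r : Ω → Ω → Prop} {K A B : Set Ω}

theorem revisionModels_of_nonempty (h : (K ∩ A).Nonempty) : revisionModels r K A = K ∩ A :=
  if_pos h

theorem revisionModels_of_not_nonempty (h : ¬(K ∩ A).Nonempty) :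
    revisionModels r K A = minSet r A :=
  if_neg h

theorem revisionModels_inter_of_not_nonempty (h : ¬(K ∩ A).Nonempty) :
    revisionModels r K (A ∩ B) = minSet r (A ∩ B) :=
  revisionModels_of_not_nonempty <| mt (Nonempty.mono (inter_subset_inter_right K
    inter_subset_left)) h

theorem revisionModels_subset : revisionModels r K A ⊆ A := by
  unfold revisionModels
  split_ifs
  exacts [inter_subset_right, minSet_subset r A]

theorem revisionModels_nonempty (hr : ∀ A : Set Ω, A.Nonempty → (minSet r A).Nonempty)
    (hA : A.Nonempty) : (revisionModels r K A).Nonempty := by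
  unfold revisionModels
  split_ifs with h
  exacts [h, hr A hA]

theorem revisionModels_inter_subset :
    revisionModels r K A ∩ B ⊆ revisionModels r K (A ∩ B) := by
  by_cases h : (K ∩ A).Nonempty
  · rw [revisionModels_of_nonempty h]
    intro ω hω
    rwa [revisionModels_of_nonempty ⟨ω, by rwa [← inter_assoc]⟩, ← inter_assoc]
  · rw [revisionModels_of_not_nonempty h, revisionModels_inter_of_not_nonempty h]
    exact minSet_inter_subset r A B

theorem revisionModels_inter_subset_of_nonempty [IsTrans Ω r]
    (hB : (revisionModels r K A ∩ B).Nonempty) :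
    revisionModels r K (A ∩ B) ⊆ revisionModels r K A ∩ B := by
  by_cases h : (K ∩ A).Nonempty
  · rw [revisionModels_of_nonempty h] at hB ⊢
    rw [revisionModels_of_nonempty (by rwa [← inter_assoc]), inter_assoc]
  · rw [revisionModels_of_not_nonempty h] at hB ⊢
    rw [revisionModels_inter_of_not_nonempty h]
    exact minSet_inter_subset_of_nonempty hB

theorem isRevision_of_md_eq_revisionModels [IsTrans Ω r] {E : Type*} {md : E → Set Ω}
    {s : E → Set Ω → E} (hr : ∀ A : Set Ω, A.Nonempty → (minSet r A).Nonempty)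
    (hs : ∀ Ψ A, md (s Ψ A) = revisionModels r (md Ψ) A) : IsRevision md s := by
  intro Ψ A B
  simp only [hs, ← nonempty_iff_ne_empty]
  exact ⟨revisionModels_subset, revisionModels_of_nonempty, revisionModels_nonempty hr,
    revisionModels_inter_subset, revisionModels_inter_subset_of_nonempty⟩

end RevisionModels

theorem exists_md_eq_revisionModels {Ω E : Type*} [PartialOrder Ω] {md : E → Set Ω}
    (h1 : ZR1 md) (h2 : ZR2 md) :
    ∃ s : E → Set Ω → E, ∀ Ψ A, md (s Ψ A) = revisionModels (· ≤ ·) (md Ψ) A := by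
  suffices h : ∀ Ψ A, ∃ Ψ' : E, md Ψ' = revisionModels (· ≤ ·) (md Ψ) A by
    choose s hs using h
    exact ⟨s, hs⟩
  intro Ψ A
  by_cases h : (md Ψ ∩ A).Nonempty
  · rw [revisionModels_of_nonempty h]
    exact h2 Ψ _ inter_subset_left
  · rw [revisionModels_of_not_nonempty h]
    rcases (minSet_le_subsingleton A).eq_empty_or_singleton with h0 | ⟨ω, hω⟩
    · rw [h0]
      exact h2 Ψ ∅ (empty_subset _)
    · rw [hω]
      exact h1 ω

theorem revision_realizable_iff_ZR1_ZR2_general {Ω E : Type*} [Nonempty E]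
    (md : E → Set Ω) :
    (∃ s : E → Set Ω → E, IsRevision md s) ↔ (ZR1 md ∧ ZR2 md) := by
  refine ⟨fun ⟨_, hs⟩ => ⟨hs.zr1, hs.zr2⟩, fun ⟨h1, h2⟩ => ?_⟩
  let _ : LinearOrder Ω := IsWellOrder.linearOrder WellOrderingRel
  have : WellFoundedLT Ω := ⟨(WellOrderingRel.isWellOrder (α := Ω)).wf⟩
  obtain ⟨s, hs⟩ := exists_md_eq_revisionModels h1 h2
  exact ⟨s, isRevision_of_md_eq_revisionModels (fun _ => minSet_le_nonempty) hs⟩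

/-- AGM revision is realizable in `⟨E, md⟩` iff `⟨E, md⟩` satisfies
both (ZR1) and (ZR2). -/
theorem revision_realizable_iff_ZR1_ZR2 {Ω E : Type*} [Fintype Ω] [Nonempty Ω] [Nonempty E]
    (md : E → Set Ω) :
    (∃ s : E → Set Ω → E, IsRevision md s) ↔ (ZR1 md ∧ ZR2 md) :=
  revision_realizable_iff_ZR1_ZR2_general md
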